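/- arXiv:1009.0241 — 5 statements merged into one kernel-verified Lean document; each statement's English description precedes it below -/
import Mathlib

section
/- The 4×4 matrix (1/√2)·[[1,0,0,1],[0,1,−1,0],[0,1,1,0],[−1,0,0,1]] is unitary and satisfies the Yang-Baxter equation (R ⊗ I₂)(I₂ ⊗ R)(R ⊗ I₂) = (I₂ ⊗ R)(R ⊗ I₂)(I₂ ⊗ R) on ℂ² ⊗ ℂ². -/
open Matrix

/-- The operator on `(ℂ^ι)^{⊗n}` (modeled as matrices indexed by `Fin n → ι`)
acting as `R` on tensor factors `i, i+1` and as the identity elsewhere. -/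
def localOp {ι : Type} [DecidableEq ι]
    (R : Matrix (ι × ι) (ι × ι) ℂ) (n i : ℕ) (h : i + 1 < n) :
    Matrix (Fin n → ι) (Fin n → ι) ℂ :=
  fun f g =>
    (if ∀ k : Fin n, (k : ℕ) ≠ i → (k : ℕ) ≠ i + 1 → f k = g k then 1 else 0) *
      R (f ⟨i, Nat.lt_of_succ_lt h⟩, f ⟨i + 1, h⟩)
        (g ⟨i, Nat.lt_of_succ_lt h⟩, g ⟨i + 1, h⟩)

/-- The Yang–Baxter equation `(R⊗I)(I⊗R)(R⊗I) = (I⊗R)(R⊗I)(I⊗R)`. -/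
def YangBaxter {ι : Type} [Fintype ι] [DecidableEq ι] (R : Matrix (ι × ι) (ι × ι) ℂ) : Prop :=
  localOp R 3 0 (by omega) * localOp R 3 1 (by omega) * localOp R 3 0 (by omega) =
    localOp R 3 1 (by omega) * localOp R 3 0 (by omega) * localOp R 3 1 (by omega)

/-- The braid relations on `m+1` strands, i.e. with `m` generators `σ_0, …, σ_{m-1}`. -/
def braidRels (m : ℕ) : Set (FreeGroup (Fin m)) :=
  {r | ∃ i j : Fin m, (i : ℕ) + 1 < (j : ℕ) ∧
      r = FreeGroup.of i * FreeGroup.of j * (FreeGroup.of i)⁻¹ * (FreeGroup.of j)⁻¹} ∪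
  {r | ∃ i j : Fin m, (j : ℕ) = (i : ℕ) + 1 ∧
      r = FreeGroup.of i * FreeGroup.of j * FreeGroup.of i *
        (FreeGroup.of j * FreeGroup.of i * FreeGroup.of j)⁻¹}

/-- Reindex a `4×4` matrix as an operator on `ℂ² ⊗ ℂ²` via the standard tensor
basis ordering `(i,j) ↦ 2i + j`. -/
def toR2 (M : Matrix (Fin 4) (Fin 4) ℂ) :
    Matrix (Fin 2 × Fin 2) (Fin 2 × Fin 2) ℂ :=
  fun p q =>
    M ⟨2 * (p.1 : ℕ) + (p.2 : ℕ), by have := p.1.isLt; have := p.2.isLt; omega⟩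
      ⟨2 * (q.1 : ℕ) + (q.2 : ℕ), by have := q.1.isLt; have := q.2.isLt; omega⟩

/-!
Both claims are polynomial identities in the entries of the matrix. Pulling out the scalar
`1/√2` (the Yang–Baxter equation is homogeneous of degree three, and unitarity becomes
`B Bᵀ = 2` for the integer matrix `B = √2 R`) turns them into identities between integer
matrices, which are decided by computation; the operators `localOp` are therefore also
considered over an arbitrary semiring.
-/

def localOp' {α ι : Type*} [Semiring α] [DecidableEq ι]
    (R : Matrix (ι × ι) (ι × ι) α) (n i : ℕ) (h : i + 1 < n) :
    Matrix (Fin n → ι) (Fin n → ι) α :=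
  fun f g =>
    (if ∀ k : Fin n, (k : ℕ) ≠ i → (k : ℕ) ≠ i + 1 → f k = g k then 1 else 0) *
      R (f ⟨i, Nat.lt_of_succ_lt h⟩, f ⟨i + 1, h⟩)
        (g ⟨i, Nat.lt_of_succ_lt h⟩, g ⟨i + 1, h⟩)

section

variable {ι : Type} [DecidableEq ι]

theorem localOp_eq_localOp' (R : Matrix (ι × ι) (ι × ι) ℂ) (n i : ℕ) (h : i + 1 < n) :
    localOp R n i h = localOp' R n i h := rfl

theorem localOp'_map {α β : Type*} [Semiring α] [Semiring β] (f : α →+* β)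
    (R : Matrix (ι × ι) (ι × ι) α) (n i : ℕ) (h : i + 1 < n) :
    localOp' (R.map f) n i h = (localOp' R n i h).map f := by
  ext x y
  simp only [localOp', Matrix.map_apply, map_mul, apply_ite f, map_one, map_zero]

theorem localOp_smul (c : ℂ) (R : Matrix (ι × ι) (ι × ι) ℂ) (n i : ℕ) (h : i + 1 < n) :
    localOp (c • R) n i h = c • localOp R n i h := by
  ext x y
  simp only [localOp, Matrix.smul_apply, smul_eq_mul]
  ring

variable [Fintype ι]

theorem YangBaxter.smul {R : Matrix (ι × ι) (ι × ι) ℂ} (hR : YangBaxter R) (c : ℂ) :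
    YangBaxter (c • R) := by
  unfold YangBaxter at hR ⊢
  simp only [localOp_smul, Matrix.smul_mul, Matrix.mul_smul, smul_smul, hR]

theorem YangBaxter.map {α : Type*} [Semiring α] (f : α →+* ℂ) {R : Matrix (ι × ι) (ι × ι) α}
    (hR : localOp' R 3 0 (by omega) * localOp' R 3 1 (by omega) * localOp' R 3 0 (by omega) =
      localOp' R 3 1 (by omega) * localOp' R 3 0 (by omega) * localOp' R 3 1 (by omega)) :
    YangBaxter (R.map f) := by
  simp only [YangBaxter, localOp_eq_localOp', localOp'_map, ← Matrix.map_mul, hR]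

end

theorem inv_sqrt_smul_mem_unitaryGroup {n : Type*} [Fintype n] [DecidableEq n]
    {A : Matrix n n ℂ} {r : ℝ} (hr : 0 < r) (hA : A * star A = (r : ℂ) • 1) :
    ((Real.sqrt r : ℝ) : ℂ)⁻¹ • A ∈ Matrix.unitaryGroup n ℂ := by
  have hc : ((Real.sqrt r : ℝ) : ℂ)⁻¹ * star (((Real.sqrt r : ℝ) : ℂ)⁻¹) * r = 1 := by
    rw [star_inv₀, Complex.star_def, Complex.conj_ofReal, ← mul_inv, ← Complex.ofReal_mul,
      Real.mul_self_sqrt hr.le, inv_mul_cancel₀ (by exact_mod_cast hr.ne')]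
  rw [Matrix.mem_unitaryGroup_iff, star_smul, Matrix.smul_mul, Matrix.mul_smul, hA, smul_smul,
    smul_smul, hc, one_smul]

/-- Kauffman and Lomonaco's Bell-basis braiding matrix scaled by `√2`, indexed by `Fin 2 × Fin 2`
through `finProdFinEquiv`, which is the ordering `(i, j) ↦ 2i + j` of `toR2`. -/
def bellMatrix : Matrix (Fin 2 × Fin 2) (Fin 2 × Fin 2) ℤ :=
  (!![1, 0, 0, 1; 0, 1, -1, 0; 0, 1, 1, 0; -1, 0, 0, 1] : Matrix (Fin 4) (Fin 4) ℤ).submatrix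
    finProdFinEquiv finProdFinEquiv

theorem toR2_smul_eq_smul_bellMatrix (c : ℂ) :
    toR2 (c • !![1, 0, 0, 1; 0, 1, -1, 0; 0, 1, 1, 0; -1, 0, 0, 1]) =
      c • bellMatrix.map (Int.castRingHom ℂ) := by
  ext p q
  fin_cases p <;> fin_cases q <;> simp [toR2, bellMatrix, finProdFinEquiv]

theorem bellMatrix_mul_transpose : bellMatrix * bellMatrix.transpose = 2 := by
  decide

theorem bellMatrix_map_mul_star :
    bellMatrix.map (Int.castRingHom ℂ) * star (bellMatrix.map (Int.castRingHom ℂ)) =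
      ((2 : ℝ) : ℂ) • 1 := by
  rw [Matrix.star_eq_conjTranspose, ← Matrix.conjTranspose_map _ fun z => by simp,
    Matrix.conjTranspose_eq_transpose_of_trivial, ← Matrix.map_mul, bellMatrix_mul_transpose]
  ext i j
  by_cases h : i = j <;> simp [h, Matrix.ofNat_apply]

theorem bellMatrix_yangBaxter :
    localOp' bellMatrix 3 0 (by omega) * localOp' bellMatrix 3 1 (by omega) *
        localOp' bellMatrix 3 0 (by omega) =
      localOp' bellMatrix 3 1 (by omega) * localOp' bellMatrix 3 0 (by omega) *
        localOp' bellMatrix 3 1 (by omega) := by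
  decide

/-- The matrix `(1/√2)·[[1,0,0,1],[0,1,−1,0],[0,1,1,0],[−1,0,0,1]]` is unitary and
satisfies the Yang–Baxter equation on `ℂ² ⊗ ℂ²`. -/
theorem stmt2 :
    toR2 ((((Real.sqrt 2 : ℝ) : ℂ)⁻¹) • !![1, 0, 0, 1; 0, 1, -1, 0; 0, 1, 1, 0; -1, 0, 0, 1]) ∈
        Matrix.unitaryGroup (Fin 2 × Fin 2) ℂ ∧
      YangBaxter
        (toR2 ((((Real.sqrt 2 : ℝ) : ℂ)⁻¹) •
          !![1, 0, 0, 1; 0, 1, -1, 0; 0, 1, 1, 0; -1, 0, 0, 1])) := by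
  rw [toR2_smul_eq_smul_bellMatrix]
  exact ⟨inv_sqrt_smul_mem_unitaryGroup two_pos bellMatrix_map_mul_star,
    (YangBaxter.map _ bellMatrix_yangBaxter).smul _⟩
end

section
/- In the abstract algebra generated by u_1, u_2 subject to u_i^p = 1 and u_1 u_2 = ω^{−2} u_2 u_1 (ω a primitive p-th root of unity, p an odd prime), the elements g_i = ζ Σ_{j=0}^{p−1} ω^{j²} u_i^j (i = 1,2, with ζ a fixed nonzero scalar) satisfy the braid relation g_1 g_2 g_1 = g_2 g_1 g_2. -/
/-!
Index the powers of `u` and of `ω` by `ZMod p`, which is legitimate because `u ^ p = ω ^ p = 1`.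
Pushing powers of `u₂` past powers of `u₁` with `u₂ ^ b u₁ ^ c = ω ^ (2bc) u₁ ^ c u₂ ^ b` writes
both triple products as sums over `(ZMod p)³` of terms `ω ^ Q • u₁ ^ x u₂ ^ y`, with
`Q = a² + (b + c)²` on the left and `Q = (a + b)² + c²` on the right. Completing the square
shows that the linear change of variables `(a, b, c) ↦ (b - a, a + c, a)` matches the two sums
term by term.
-/

open Finset

section PowZMod

variable {M : Type*} [Monoid M] {n : ℕ} [NeZero n] {u : M}

lemma pow_eq_pow_of_natCast_eq (hu : u ^ n = 1) {a b : ℕ}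
    (hab : (a : ZMod n) = b) : u ^ a = u ^ b :=
  (isOfFinOrder_iff_pow_eq_one.mpr ⟨n, Nat.pos_of_neZero n, hu⟩).pow_eq_pow_iff_modEq.mpr <|
    ((ZMod.natCast_eq_natCast_iff a b n).mp hab).of_dvd (orderOf_dvd_of_pow_eq_one hu)

lemma pow_val_add (hu : u ^ n = 1) (a b : ZMod n) :
    u ^ (a + b).val = u ^ a.val * u ^ b.val := by
  rw [← pow_add]
  exact pow_eq_pow_of_natCast_eq hu (by simp)

end PowZMod

lemma pow_mul_pow_eq_smul_of_mul_eq_smul {R A : Type*} [CommSemiring R] [Semiring A]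
    [Algebra R A] {r : R} {u v : A} (hvu : v * u = r • (u * v)) (b c : ℕ) :
    v ^ b * u ^ c = r ^ (b * c) • (u ^ c * v ^ b) := by
  have hb : ∀ b : ℕ, v ^ b * u = r ^ b • (u * v ^ b) := by
    intro b
    induction b with
    | zero => simp
    | succ b ih =>
      rw [pow_succ, mul_assoc, hvu, mul_smul_comm, ← mul_assoc, ih, smul_mul_assoc, smul_smul,
        mul_assoc, ← pow_succ, ← pow_succ']
  induction c with
  | zero => simp
  | succ c ih =>
    rw [pow_succ, ← mul_assoc, ih, smul_mul_assoc, mul_assoc, hb, mul_smul_comm, smul_smul,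
      ← mul_assoc, ← pow_succ, ← pow_add, Nat.mul_succ]

lemma sum_mul_sum_mul_sum {ι A : Type*} [Fintype ι] [NonUnitalNonAssocSemiring A]
    (f g h : ι → A) :
    (∑ i, f i) * (∑ j, g j) * (∑ k, h k) = ∑ t : ι × ι × ι, f t.1 * g t.2.1 * h t.2.2 := by
  simp only [Fintype.sum_prod_type, sum_mul]
  simp only [mul_sum, sum_mul]
  exact sum_congr rfl fun _ _ => sum_comm

noncomputable def gaussElement {R A : Type*} [CommSemiring R] [Semiring A] [Algebra R A]
    (n : ℕ) [NeZero n] (w : R) (u : A) : A :=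
  ∑ k : ZMod n, w ^ (k * k).val • u ^ k.val

section GaussElement

variable {R A : Type*} [CommSemiring R] [Semiring A] [Algebra R A] {n : ℕ} [NeZero n]
  {w : R} {u v : A}

lemma sum_range_eq_gaussElement (hw : w ^ n = 1) :
    ∑ j ∈ range n, w ^ (j ^ 2) • u ^ j = gaussElement n w u := by
  refine sum_nbij' (fun j => (j : ZMod n)) ZMod.val (by simp) (by simp [ZMod.val_lt])
    (fun j hj => ZMod.val_natCast_of_lt (mem_range.mp hj)) (by simp) fun j hj => ?_
  rw [ZMod.val_natCast_of_lt (mem_range.mp hj)]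
  congr 1
  exact pow_eq_pow_of_natCast_eq hw (by simp [sq])

lemma pow_val_mul_pow_val_of_mul_eq_smul (hw : w ^ n = 1) (hvu : v * u = w ^ 2 • (u * v))
    (b c : ZMod n) :
    v ^ b.val * u ^ c.val = w ^ (2 * b * c).val • (u ^ c.val * v ^ b.val) := by
  rw [pow_mul_pow_eq_smul_of_mul_eq_smul hvu, ← pow_mul, ← mul_assoc]
  congr 1
  exact pow_eq_pow_of_natCast_eq hw (by simp)

lemma gaussElement_uvu_eq_sum (hw : w ^ n = 1) (hu : u ^ n = 1)
    (hvu : v * u = w ^ 2 • (u * v)) :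
    gaussElement n w u * gaussElement n w v * gaussElement n w u =
      ∑ t : ZMod n × ZMod n × ZMod n,
        w ^ (t.1 * t.1 + (t.2.1 + t.2.2) * (t.2.1 + t.2.2)).val •
          (u ^ (t.1 + t.2.2).val * v ^ t.2.1.val) := by
  rw [gaussElement, gaussElement, sum_mul_sum_mul_sum]
  refine sum_congr rfl fun ⟨a, b, c⟩ _ => ?_
  rw [smul_mul_smul_comm, smul_mul_smul_comm, mul_assoc (u ^ a.val),
    pow_val_mul_pow_val_of_mul_eq_smul hw hvu, mul_smul_comm, ← mul_assoc, ← pow_val_add hu,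
    smul_smul, ← pow_val_add hw, ← pow_val_add hw, ← pow_val_add hw]
  congr 3
  ring

lemma gaussElement_vuv_eq_sum (hw : w ^ n = 1) (hv : v ^ n = 1)
    (hvu : v * u = w ^ 2 • (u * v)) :
    gaussElement n w v * gaussElement n w u * gaussElement n w v =
      ∑ t : ZMod n × ZMod n × ZMod n,
        w ^ ((t.1 + t.2.1) * (t.1 + t.2.1) + t.2.2 * t.2.2).val •
          (u ^ t.2.1.val * v ^ (t.1 + t.2.2).val) := by
  rw [gaussElement, gaussElement, sum_mul_sum_mul_sum]
  refine sum_congr rfl fun ⟨a, b, c⟩ _ => ?_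
  rw [smul_mul_smul_comm, smul_mul_smul_comm, pow_val_mul_pow_val_of_mul_eq_smul hw hvu,
    smul_mul_assoc, mul_assoc (u ^ b.val), ← pow_val_add hv, smul_smul, ← pow_val_add hw,
    ← pow_val_add hw, ← pow_val_add hw]
  congr 3
  ring

lemma gaussElement_braid (hw : w ^ n = 1) (hu : u ^ n = 1) (hv : v ^ n = 1)
    (hvu : v * u = w ^ 2 • (u * v)) :
    gaussElement n w u * gaussElement n w v * gaussElement n w u =
      gaussElement n w v * gaussElement n w u * gaussElement n w v := by
  rw [gaussElement_uvu_eq_sum hw hu hvu, gaussElement_vuv_eq_sum hw hv hvu]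
  let e : ZMod n × ZMod n × ZMod n ≃ ZMod n × ZMod n × ZMod n :=
    { toFun := fun ⟨a, b, c⟩ => (b - a, a + c, a)
      invFun := fun ⟨a, b, c⟩ => (c, a + c, b - c)
      left_inv := fun ⟨a, b, c⟩ => by simp
      right_inv := fun ⟨a, b, c⟩ => by simp }
  refine Fintype.sum_equiv e _ _ fun ⟨a, b, c⟩ => ?_
  simp only [e, Equiv.coe_fn_mk, sub_add_cancel]
  congr 3
  ring

end GaussElement

theorem stmt9_general (p : ℕ)
    (ω : ℂ) (hω : IsPrimitiveRoot ω p)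
    (A : Type) [Ring A] [Algebra ℂ A] (u₁ u₂ : A)
    (h₁ : u₁ ^ p = 1) (h₂ : u₂ ^ p = 1)
    (hcomm : u₁ * u₂ = (ω⁻¹) ^ 2 • (u₂ * u₁)) (ζ : ℂ)
    (g₁ g₂ : A)
    (hg₁ : g₁ = ζ • ∑ j ∈ Finset.range p, ω ^ (j ^ 2) • u₁ ^ j)
    (hg₂ : g₂ = ζ • ∑ j ∈ Finset.range p, ω ^ (j ^ 2) • u₂ ^ j) :
    g₁ * g₂ * g₁ = g₂ * g₁ * g₂ := by
  obtain rfl | hp := eq_or_ne p 0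
  · simp [hg₁, hg₂]
  have : NeZero p := ⟨hp⟩
  have hω₁ : ω ^ p = 1 := hω.pow_eq_one
  have h₂₁ : u₂ * u₁ = ω ^ 2 • (u₁ * u₂) := by
    rw [hcomm, smul_smul, ← mul_pow, mul_inv_cancel₀ (hω.ne_zero hp), one_pow, one_smul]
  rw [hg₁, hg₂, sum_range_eq_gaussElement hω₁, sum_range_eq_gaussElement hω₁]
  simp only [smul_mul_smul_comm, gaussElement_braid hω₁ h₁ h₂ h₂₁]

/-- In the algebra generated by `u₁, u₂` with `uᵢ^p = 1` and `u₁ u₂ = ω^{−2} u₂ u₁`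
(`ω` a primitive `p`-th root of unity, `p` an odd prime), the Gaussian elements
`gᵢ = ζ Σ_{j=0}^{p−1} ω^{j²} uᵢ^j` satisfy the braid relation `g₁ g₂ g₁ = g₂ g₁ g₂`. -/
theorem stmt9 (p : ℕ) (hp : p.Prime) (hodd : Odd p)
    (ω : ℂ) (hω : IsPrimitiveRoot ω p)
    (A : Type) [Ring A] [Algebra ℂ A] (u₁ u₂ : A)
    (h₁ : u₁ ^ p = 1) (h₂ : u₂ ^ p = 1)
    (hcomm : u₁ * u₂ = (ω⁻¹) ^ 2 • (u₂ * u₁)) (ζ : ℂ)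
    (g₁ g₂ : A)
    (hg₁ : g₁ = ζ • ∑ j ∈ Finset.range p, ω ^ (j ^ 2) • u₁ ^ j)
    (hg₂ : g₂ = ζ • ∑ j ∈ Finset.range p, ω ^ (j ^ 2) • u₂ ^ j) :
    g₁ * g₂ * g₁ = g₂ * g₁ * g₂ :=
  stmt9_general p ω hω A u₁ u₂ h₁ h₂ hcomm ζ g₁ g₂ hg₁ hg₂
end

section
/- An algebraic integer λ > 0 that lies in a cyclotomic extension of ℚ and whose minimal polynomial over ℚ is of the form x^s − c for some positive rational c must satisfy s ≤ 2; consequently λ² ∈ ℕ. -/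
/-!
As `ℚ(ζ_N)/ℚ` is abelian, its subfield `ℚ(λ)` is Galois over `ℚ`, so every root of the minimal
polynomial `X^s - c` of `λ` lies in `ℚ(λ) ⊆ ℝ`. Among these roots is `λ ζ_s`, which is real only
if the primitive `s`-th root of unity `ζ_s` is real, that is, only if `s ∣ 2`. Then
`λ² = c^(2/s)` is a rational algebraic integer, hence an integer, and it is nonnegative as the
square of a real number.
-/

open Polynomial IntermediateField

theorem IntermediateField.rootSet_minpoly_subset {F L : Type*} [Field F] [Field L] [Algebra F L]
    (E : IntermediateField F L) [Normal F E] {x : L} (hx : x ∈ E) :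
    (minpoly F x).rootSet L ⊆ E := by
  have h := (Normal.splits ‹_› (⟨x, hx⟩ : E)).image_rootSet_algebraMap (B := L)
  rw [minpoly_eq] at h
  rw [← h]
  rintro _ ⟨y, -, rfl⟩
  exact y.2

theorem IsPrimitiveRoot.isCyclotomicExtension_intermediateField_adjoin {K L : Type*} [Field K]
    [Field L] [Algebra K L] {n : ℕ} [NeZero n] {ζ : L} (hζ : IsPrimitiveRoot ζ n) :
    IsCyclotomicExtension {n} K K⟮ζ⟯ := by
  change IsCyclotomicExtension {n} K K⟮ζ⟯.toSubalgebra
  rw [adjoin_simple_toSubalgebra_of_isAlgebraic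
    ((hζ.isIntegral (NeZero.pos n)).tower_top).isAlgebraic]
  exact hζ.adjoin_isCyclotomicExtension K

theorem IsPrimitiveRoot.isAbelianGalois_adjoin_of_mem_adjoin {K L : Type*} [Field K] [Field L]
    [Algebra K L] {n : ℕ} [NeZero n] {ζ x : L} (hζ : IsPrimitiveRoot ζ n)
    (hx : x ∈ Algebra.adjoin K {ζ}) : IsAbelianGalois K K⟮x⟯ :=
  have := hζ.isCyclotomicExtension_intermediateField_adjoin (K := K)
  have := IsCyclotomicExtension.isAbelianGalois {n} K K⟮ζ⟯
  .of_algHom (inclusion (adjoin_simple_le_iff.mpr (algebra_adjoin_le_adjoin K _ hx)))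

theorem Complex.im_eq_zero_of_mem_rootSet_minpoly {F : Type*} [Field F] [Algebra F ℝ]
    [Algebra F ℂ] [IsScalarTower F ℝ ℂ] {x : ℂ} (hx : x.im = 0) [Normal F F⟮x⟯] {z : ℂ}
    (hz : z ∈ (minpoly F x).rootSet ℂ) : z.im = 0 := by
  have hle : F⟮x⟯ ≤ (ofRealAm.restrictScalars F).fieldRange :=
    adjoin_simple_le_iff.mpr ⟨x.re, Complex.ext rfl hx.symm⟩
  obtain ⟨r, rfl⟩ := hle (F⟮x⟯.rootSet_minpoly_subset (mem_adjoin_simple_self F x) hz)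
  simp

theorem IsPrimitiveRoot.dvd_two_of_linearOrder {R : Type*} [CommRing R] [LinearOrder R]
    [IsStrictOrderedRing R] {r : R} {n : ℕ} (hn : n ≠ 0) (hr : IsPrimitiveRoot r n) : n ∣ 2 := by
  refine hr.dvd_of_pow_eq_one 2 ?_
  rcases (pow_eq_one_iff_of_ne_zero hn).mp hr.pow_eq_one with rfl | ⟨rfl, -⟩ <;> simp

theorem Complex.dvd_two_of_forall_pow_eq_im_eq_zero {x : ℂ} {s : ℕ} (hs : s ≠ 0) (hx0 : x ≠ 0)
    (hx : x.im = 0) (h : ∀ z : ℂ, z ^ s = x ^ s → z.im = 0) : s ∣ 2 := by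
  set ζ := exp (2 * Real.pi * I / s)
  have hζ : IsPrimitiveRoot ζ s := isPrimitiveRoot_exp s hs
  have hre : x.re ≠ 0 := fun h0 => hx0 (Complex.ext h0 hx)
  have hζim : ζ.im = 0 := by
    have := h (x * ζ) (by rw [mul_pow, hζ.pow_eq_one, mul_one])
    simpa [mul_im, hx, hre] using this
  have hζ_eq : ((ζ.re : ℝ) : ℂ) = ζ := Complex.ext rfl (by simp [hζim])
  rw [← hζ_eq] at hζ
  exact ((IsPrimitiveRoot.map_iff_of_injective (f := ofRealHom) ofReal_injective).mp hζ)
    |>.dvd_two_of_linearOrder hs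

theorem IsIntegral.exists_intCast_of_eq_ratCast {K : Type*} [Field K] [CharZero K] {x : K}
    (hx : IsIntegral ℤ x) {q : ℚ} (hq : x = q) : ∃ m : ℤ, x = m := by
  subst hq
  rw [← eq_ratCast (algebraMap ℚ K), isIntegral_algebraMap_iff (algebraMap ℚ K).injective,
    IsIntegrallyClosed.isIntegral_iff] at hx
  obtain ⟨m, rfl⟩ := hx
  exact ⟨m, by simp⟩

theorem stmt12_general (lam : ℂ) (hre : 0 < lam.re) (him : lam.im = 0)
    (hint : IsIntegral ℤ lam)
    (hcyc : ∃ N : ℕ, 0 < N ∧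
      lam ∈ Algebra.adjoin ℚ ({Complex.exp (2 * Real.pi * Complex.I / N)} : Set ℂ))
    (s : ℕ) (c : ℚ)
    (hmin : minpoly ℚ lam = X ^ s - C c) :
    s ≤ 2 ∧ ∃ k : ℕ, lam ^ 2 = k := by
  obtain ⟨N, hN, hmem⟩ := hcyc
  have : NeZero N := ⟨hN.ne'⟩
  have := (Complex.isPrimitiveRoot_exp N hN.ne').isAbelianGalois_adjoin_of_mem_adjoin hmem
  have hQ : IsIntegral ℚ lam := hint.tower_top
  have hpow : lam ^ s = c := by simpa [hmin, sub_eq_zero] using minpoly.aeval ℚ lam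
  have hs : s ≠ 0 := by
    have := minpoly.natDegree_pos hQ
    rw [hmin, natDegree_X_pow_sub_C] at this
    omega
  have hdvd : s ∣ 2 := by
    refine Complex.dvd_two_of_forall_pow_eq_im_eq_zero hs (fun h => by simp [h] at hre) him
      fun z hz => Complex.im_eq_zero_of_mem_rootSet_minpoly (F := ℚ) him ?_
    rw [mem_rootSet, hmin]
    exact ⟨X_pow_sub_C_ne_zero (Nat.pos_of_ne_zero hs) c, by simp [hz, hpow]⟩
  refine ⟨Nat.le_of_dvd two_pos hdvd, ?_⟩
  obtain ⟨t, ht⟩ := hdvd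
  obtain ⟨m, hm⟩ := (hint.pow 2).exists_intCast_of_eq_ratCast (q := c ^ t)
    (by rw [ht, pow_mul, hpow]; push_cast; rfl)
  have hm0 : 0 ≤ m := by
    have := congrArg Complex.re hm
    simp only [sq, Complex.mul_re, him, mul_zero, sub_zero, Complex.intCast_re] at this
    exact_mod_cast this ▸ mul_self_nonneg lam.re
  lift m to ℕ using hm0
  exact ⟨m, by simpa using hm⟩

/-- A positive real algebraic integer lying in a cyclotomic extension of `ℚ` whose
minimal polynomial over `ℚ` has the form `x^s − c` with `c` a positive rational must
have `s ≤ 2`; consequently its square is a natural number. -/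
theorem stmt12 (lam : ℂ) (hre : 0 < lam.re) (him : lam.im = 0)
    (hint : IsIntegral ℤ lam)
    (hcyc : ∃ N : ℕ, 0 < N ∧
      lam ∈ Algebra.adjoin ℚ ({Complex.exp (2 * Real.pi * Complex.I / N)} : Set ℂ))
    (s : ℕ) (c : ℚ) (hc : 0 < c)
    (hmin : minpoly ℚ lam = X ^ s - C c) :
    s ≤ 2 ∧ ∃ k : ℕ, lam ^ 2 = k :=
  stmt12_general lam hre him hint hcyc s c hmin
end

section
/- Let F_n denote the Fibonacci-type dimension sequence defined by the Fibonacci fusion rules: d_1(1) = 0, d_1(τ) = 1, and d_{n+1}(1) = d_n(τ), d_{n+1}(τ) = d_n(1) + d_n(τ). Then there is no integer m ≥ 1 and sequence of positive integer pairs (a_n, b_n) with m^n = a_n·d_n(1) + b_n·d_n(τ) and m·(a_n, b_n) obtained from (a_{n+1}, b_{n+1}) via the fusion inclusion matrix [[0,1],[1,1]] for all large n; i.e., the golden-ratio Perron-Frobenius eigenvalue (1+√5)/2 obstructs combinatorial localization. -/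
/-!
The quadratic form `Q(x, y) = x² + xy - y²` vanishes exactly on the eigenlines of the fusion
matrix `G = [[0,1],[1,1]]` and satisfies `Q(G v) = -Q(v)`. Hence `m · a n = G · a (n+1)` forces
`|Q(a n)| = m^(2(n-k)) |Q(a k)|`, and `Q(a k) ≠ 0` because `√5` is irrational. On the other hand
`⟨a n, d n⟩ = m^n` with `d (n+1) = (F n, F (n+1))` bounds `F n² |Q(a (n+1))|` by `m^(2(n+1))`.
Together these give `F n ≤ m^k` for all `n ≥ k`, contradicting the growth of the Fibonacci numbers.
-/

def goldenForm (v : ℕ × ℕ) : ℤ := (v.1 : ℤ) ^ 2 + v.1 * v.2 - (v.2 : ℤ) ^ 2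

theorem goldenForm_ne_zero {v : ℕ × ℕ} (hv : 0 < v.2) : goldenForm v ≠ 0 := by
  intro h
  unfold goldenForm at h
  have hy : (v.2 : ℚ) ≠ 0 := by positivity
  have hsq : ((2 * v.1 + v.2 : ℚ) / v.2) ^ 2 = 5 := by
    have h' : ((v.1 : ℚ) ^ 2 + v.1 * v.2 - (v.2 : ℚ) ^ 2) = 0 := by
      exact_mod_cast h
    field_simp
    -- `(2x + y)² - 5y² = 4 Q(x, y)`
    linear_combination 4 * h'
  have : IsSquare (5 : ℚ) := ⟨_, by rw [← hsq, sq]⟩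
  norm_num at this

theorem goldenForm_eq_neg_sq_mul_of_fusion {m : ℕ} {v w : ℕ × ℕ} (h₁ : m * v.1 = w.2)
    (h₂ : m * v.2 = w.1 + w.2) : goldenForm w = -(m : ℤ) ^ 2 * goldenForm v := by
  have h₁' : (m : ℤ) * v.1 = w.2 := by exact_mod_cast h₁
  have h₂' : (m : ℤ) * v.2 = w.1 + w.2 := by exact_mod_cast h₂
  have hw₁ : (w.1 : ℤ) = m * v.2 - m * v.1 := by linarith
  simp only [goldenForm, hw₁, ← h₁']
  ring

theorem sq_mul_abs_goldenForm_le {p q : ℕ} (hpq : p ≤ q) (v : ℕ × ℕ) :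
    (p : ℤ) ^ 2 * |goldenForm v| ≤ ((v.1 * p + v.2 * q : ℕ) : ℤ) ^ 2 := by
  have hQ : |goldenForm v| ≤ ((v.1 + v.2 : ℕ) : ℤ) ^ 2 := by
    rw [abs_le, goldenForm]
    push_cast
    constructor <;> nlinarith [Int.natCast_nonneg v.1, Int.natCast_nonneg v.2]
  have hpair : p * (v.1 + v.2) ≤ v.1 * p + v.2 * q := by nlinarith
  calc (p : ℤ) ^ 2 * |goldenForm v| ≤ (p : ℤ) ^ 2 * ((v.1 + v.2 : ℕ) : ℤ) ^ 2 := by gcongr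
    _ = ((p * (v.1 + v.2) : ℕ) : ℤ) ^ 2 := by push_cast; ring
    _ ≤ ((v.1 * p + v.2 * q : ℕ) : ℤ) ^ 2 := by gcongr

theorem dims_succ_eq_fib {d : ℕ → ℕ × ℕ} (hd1 : d 1 = (0, 1))
    (hd : ∀ n, d (n + 1) = ((d n).2, (d n).1 + (d n).2)) (n : ℕ) :
    d (n + 1) = (Nat.fib n, Nat.fib (n + 1)) := by
  induction n with
  | zero => simpa using hd1
  | succ n ih => rw [hd, ih, Nat.fib_add_two]

theorem abs_goldenForm_add_eq {m k : ℕ} {a : ℕ → ℕ × ℕ}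
    (h : ∀ n, k ≤ n → m * (a n).1 = (a (n + 1)).2 ∧ m * (a n).2 = (a (n + 1)).1 + (a (n + 1)).2)
    (j : ℕ) : |goldenForm (a (k + j))| = (m : ℤ) ^ (2 * j) * |goldenForm (a k)| := by
  induction j with
  | zero => simp
  | succ j ih =>
    obtain ⟨h₁, h₂⟩ := h (k + j) (Nat.le_add_right k j)
    rw [← add_assoc, goldenForm_eq_neg_sq_mul_of_fusion h₁ h₂, abs_mul, ih, abs_neg, abs_pow,
      Nat.abs_cast]
    ring

theorem fib_le_pow_of_localization {d : ℕ → ℕ × ℕ} (hd1 : d 1 = (0, 1))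
    (hd : ∀ n, d (n + 1) = ((d n).2, (d n).1 + (d n).2)) {m k : ℕ} {a : ℕ → ℕ × ℕ}
    (hm : 1 ≤ m)
    (h : ∀ n, k ≤ n →
        0 < (a n).1 ∧ 0 < (a n).2 ∧
        m ^ n = (a n).1 * (d n).1 + (a n).2 * (d n).2 ∧
        m * (a n).1 = (a (n + 1)).2 ∧
        m * (a n).2 = (a (n + 1)).1 + (a (n + 1)).2)
    (j : ℕ) : Nat.fib (k + j) ≤ m ^ k := by
  have hQk : 1 ≤ |goldenForm (a k)| :=
    Int.one_le_abs (goldenForm_ne_zero (h k le_rfl).2.1)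
  have hgrowth := abs_goldenForm_add_eq (fun n hn ↦ (h n hn).2.2.2) (j + 1)
  have hbound := sq_mul_abs_goldenForm_le (Nat.fib_le_fib_succ (n := k + j)) (a (k + j + 1))
  have hpairing := (h (k + j + 1) (by omega)).2.2.1
  simp only [dims_succ_eq_fib hd1 hd] at hpairing
  rw [← hpairing, add_assoc, hgrowth] at hbound
  have hpos : (0 : ℤ) < (m : ℤ) ^ (2 * (j + 1)) := by positivity
  have hsq : ((Nat.fib (k + j) : ℤ)) ^ 2 ≤ ((m : ℤ) ^ k) ^ 2 := by
    refine le_of_mul_le_mul_right ?_ hpos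
    calc (Nat.fib (k + j) : ℤ) ^ 2 * (m : ℤ) ^ (2 * (j + 1))
        ≤ (Nat.fib (k + j) : ℤ) ^ 2 * ((m : ℤ) ^ (2 * (j + 1)) * |goldenForm (a k)|) := by
          gcongr; exact le_mul_of_one_le_right hpos.le hQk
      _ ≤ ((m ^ (k + j + 1) : ℕ) : ℤ) ^ 2 := hbound
      _ = ((m : ℤ) ^ k) ^ 2 * (m : ℤ) ^ (2 * (j + 1)) := by push_cast; ring
  exact_mod_cast (pow_le_pow_iff_left₀ (by positivity) (by positivity) two_ne_zero).mp hsq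

/-- The Fibonacci fusion rules cannot be combinatorially localized: with dimension
sequence `d 1 = (0,1)`, `d (n+1) = ((d n).2, (d n).1 + (d n).2)` (fusion matrix
`[[0,1],[1,1]]`), there is no `m ≥ 1`, depth `k`, and sequence of strictly positive
integer pairs `a n` with `m^n = ⟨a n, d n⟩` and `m · a n = G · a (n+1)` for all
`n ≥ k`. -/
theorem stmt15 (d : ℕ → ℕ × ℕ) (hd1 : d 1 = (0, 1))
    (hd : ∀ n, d (n + 1) = ((d n).2, (d n).1 + (d n).2)) :
    ¬ ∃ (m : ℕ) (a : ℕ → ℕ × ℕ) (k : ℕ), 1 ≤ m ∧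
      ∀ n, k ≤ n →
        0 < (a n).1 ∧ 0 < (a n).2 ∧
        m ^ n = (a n).1 * (d n).1 + (a n).2 * (d n).2 ∧
        m * (a n).1 = (a (n + 1)).2 ∧
        m * (a n).2 = (a (n + 1)).1 + (a (n + 1)).2 := by
  rintro ⟨m, a, k, hm, h⟩
  have hbounded := fib_le_pow_of_localization hd1 hd hm h (m ^ k + 5)
  have hlarge := Nat.le_fib_self (n := k + (m ^ k + 5)) (by omega)
  omega
end

section
/- 2·cos(π/ℓ) is the square root of a nonnegative integer if and only if ℓ ∈ {1, 2, 3, 4, 6} (for integers ℓ ≥ 1). -/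
/-!
For `ℓ ≥ 2` the angle `π / ℓ` lies in `(0, π / 2]`, so `(2 cos (π / ℓ))²` lies in `[0, 4)` and
is strictly increasing in `ℓ`. An integer value must therefore be one of `0, 1, 2, 3`, which are
attained at `ℓ = 2, 3, 4, 6`; the case `ℓ = 1` gives `4`.
-/

open Real Set

lemma pi_div_mem_Icc {x : ℝ} (hx : 1 ≤ x) : π / x ∈ Icc 0 π :=
  ⟨by positivity, div_le_self pi_pos.le hx⟩

lemma strictMonoOn_cos_pi_div : StrictMonoOn (fun x : ℝ => cos (π / x)) (Ici 1) :=
  fun x hx y hy hxy =>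
    strictAntiOn_cos (pi_div_mem_Icc hy) (pi_div_mem_Icc hx)
      (div_lt_div_of_pos_left pi_pos (by linarith [mem_Ici.mp hx]) hxy)

lemma cos_pi_div_nonneg {x : ℝ} (hx : 2 ≤ x) : 0 ≤ cos (π / x) :=
  cos_nonneg_of_mem_Icc ⟨by linarith [pi_pos, (pi_div_mem_Icc (by linarith : (1 : ℝ) ≤ x)).1],
    div_le_div_of_nonneg_left pi_pos.le two_pos hx⟩

lemma strictMonoOn_sq_two_mul_cos_pi_div :
    StrictMonoOn (fun x : ℝ => (2 * cos (π / x)) ^ 2) (Ici 2) := fun x hx y hy hxy => by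
  have hx1 : (1 : ℝ) ≤ x := by linarith [mem_Ici.mp hx]
  have hy1 : (1 : ℝ) ≤ y := by linarith [mem_Ici.mp hy]
  have hcos := strictMonoOn_cos_pi_div hx1 hy1 hxy
  have hnonneg := cos_pi_div_nonneg hx
  dsimp only
  gcongr

lemma sq_two_mul_cos_pi_div_lt_four {x : ℝ} (hx : 2 ≤ x) : (2 * cos (π / x)) ^ 2 < 4 := by
  have hlt : cos (π / x) < 1 := by
    rw [← cos_zero]
    exact strictAntiOn_cos ⟨le_rfl, pi_pos.le⟩ (pi_div_mem_Icc (by linarith))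
      (by have := pi_pos; positivity)
  nlinarith [cos_pi_div_nonneg hx]

/-- For integers `ℓ ≥ 1`, `2cos(π/ℓ)` is the square root of a nonnegative integer,
i.e. `(2cos(π/ℓ))² ∈ ℕ`, if and only if `ℓ ∈ {1, 2, 3, 4, 6}`. -/
theorem stmt16 (ℓ : ℕ) (hℓ : 1 ≤ ℓ) :
    (∃ k : ℕ, (2 * Real.cos (Real.pi / ℓ)) ^ 2 = k) ↔
      ℓ = 1 ∨ ℓ = 2 ∨ ℓ = 3 ∨ ℓ = 4 ∨ ℓ = 6 := by
  constructor
  · rintro ⟨k, hk⟩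
    obtain rfl | hℓ2 := hℓ.eq_or_lt
    · exact Or.inl rfl
    have hℓ2' : (2 : ℝ) ≤ ℓ := by exact_mod_cast hℓ2
    have hk4 : k < 4 := by exact_mod_cast hk ▸ sq_two_mul_cos_pi_div_lt_four hℓ2'
    have eq_of_value : ∀ m : ℕ, 2 ≤ m → (2 * cos (π / m)) ^ 2 = k → ℓ = m := fun m hm hmk =>
      Nat.cast_injective <| strictMonoOn_sq_two_mul_cos_pi_div.injOn hℓ2'
        (by exact_mod_cast hm : (2 : ℝ) ≤ m) (hk.trans hmk.symm)
    interval_cases k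
    · exact Or.inr <| Or.inl <| eq_of_value 2 le_rfl (by norm_num)
    · exact Or.inr <| Or.inr <| Or.inl <| eq_of_value 3 (by norm_num) (by norm_num)
    · exact Or.inr <| Or.inr <| Or.inr <| Or.inl <|
        eq_of_value 4 (by norm_num) (by norm_num [mul_div_cancel₀])
    · exact Or.inr <| Or.inr <| Or.inr <| Or.inr <|
        eq_of_value 6 (by norm_num) (by norm_num [mul_div_cancel₀])
  · rintro (rfl | rfl | rfl | rfl | rfl)
    · exact ⟨4, by norm_num⟩
    · exact ⟨0, by norm_num⟩
    · exact ⟨1, by norm_num⟩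
    · exact ⟨2, by norm_num [mul_div_cancel₀]⟩
    · exact ⟨3, by norm_num [mul_div_cancel₀]⟩
end
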